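/- arXiv:2201.07380 — 6 statements merged into one kernel-verified Lean document; each statement's English description precedes it below -/
import Mathlib

section
/- Let m ∈ (0,1) and let D be a nonempty harmonically m-convex set of positive real numbers. Then D is starshaped in the sense that for every x ∈ D and every t ∈ (0,1], the point t*x belongs to D. -/
/-- A set `D` of reals is harmonically `m`-convex if for all `x, y ∈ D` and
`t ∈ [0,1]`, the harmonic `m`-combination `m*x*y/(t*m*x + (1-t)*y)` lies in `D`. -/
def HarmMConvexSet (m : ℝ) (D : Set ℝ) : Prop :=
  ∀ x ∈ D, ∀ y ∈ D, ∀ t ∈ Set.Icc (0:ℝ) 1,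
    m * x * y / (t * m * x + (1 - t) * y) ∈ D

/-!
Taking `y = x` in the definition, the harmonic `m`-combination of `x` with itself is
`c * x` for every `c ∈ [m, 1]`. Iterating, `D` is closed under scaling by `[mⁿ, 1]` for
every `n`, and these intervals exhaust `(0, 1]` since `mⁿ → 0`.
-/

theorem HarmMConvexSet.mul_mem {m : ℝ} {D : Set ℝ} (hD : HarmMConvexSet m D)
    (hm : m ∈ Set.Ioo (0 : ℝ) 1) {c : ℝ} (hc : c ∈ Set.Icc m 1) {x : ℝ} (hx : x ∈ D) :
    c * x ∈ D := by
  obtain ⟨hm0, hm1⟩ := hm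
  obtain ⟨hmc, hc1⟩ := hc
  have hc0 : 0 < c := hm0.trans_le hmc
  have hden : 0 < c * (1 - m) := mul_pos hc0 (by linarith)
  -- `s` solves `s * m + (1 - s) = m / c`, which makes the combination equal to `c * x`.
  set s := (c - m) / (c * (1 - m)) with hs
  have hs_mem : s ∈ Set.Icc (0 : ℝ) 1 :=
    ⟨div_nonneg (by linarith) hden.le, by rw [hs, div_le_one hden]; nlinarith⟩
  have hcomb : m * x * x / (s * m * x + (1 - s) * x) = c * x := by
    have hsm : s * m * x + (1 - s) * x = m / c * x := by
      rw [hs]; field_simp; ring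
    rw [hsm]
    rcases eq_or_ne x 0 with rfl | hx0
    · simp
    · field_simp
  simpa only [hcomb] using hD x hx x hx s hs_mem

theorem mul_mem_of_forall_mem_Icc_mul_mem {m : ℝ} (hm : m ∈ Set.Ioo (0 : ℝ) 1) {S : Set ℝ}
    (hS : ∀ c ∈ Set.Icc m 1, ∀ x ∈ S, c * x ∈ S) {t : ℝ} (ht : t ∈ Set.Ioc (0 : ℝ) 1)
    {x : ℝ} (hx : x ∈ S) : t * x ∈ S := by
  obtain ⟨hm0, hm1⟩ := hm
  have hpow : ∀ n : ℕ, ∀ t ∈ Set.Icc (m ^ n) 1, ∀ x ∈ S, t * x ∈ S := by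
    intro n
    induction n with
    | zero =>
      rintro t ⟨h1, h2⟩ x hx
      rw [le_antisymm h2 (by simpa using h1), one_mul]
      exact hx
    | succ n ih =>
      rintro t ⟨h1, h2⟩ x hx
      by_cases hmt : m ≤ t
      · exact hS t ⟨hmt, h2⟩ x hx
      have htm : t / m ∈ Set.Icc (m ^ n) 1 :=
        ⟨by rw [le_div_iff₀ hm0, ← pow_succ]; exact h1,
          by rw [div_le_one hm0]; linarith⟩
      have h := hS m ⟨le_rfl, hm1.le⟩ _ (ih (t / m) htm x hx)
      rwa [← mul_assoc, mul_div_cancel₀ t hm0.ne'] at h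
  obtain ⟨n, hn⟩ := exists_pow_lt_of_lt_one ht.1 hm1
  exact hpow n t ⟨hn.le, ht.2⟩ x hx

theorem stmt_0_general (m : ℝ) (hm : m ∈ Set.Ioo (0:ℝ) 1) (D : Set ℝ)
    (hD : HarmMConvexSet m D) :
    ∀ x ∈ D, ∀ t ∈ Set.Ioc (0:ℝ) 1, t * x ∈ D :=
  fun _ hx _ ht =>
    mul_mem_of_forall_mem_Icc_mul_mem hm (fun _ hc _ hy => hD.mul_mem hm hc hy) ht hx

theorem stmt_0 (m : ℝ) (hm : m ∈ Set.Ioo (0:ℝ) 1) (D : Set ℝ)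
    (hDne : D.Nonempty) (hDpos : ∀ x ∈ D, 0 < x)
    (hD : HarmMConvexSet m D) :
    ∀ x ∈ D, ∀ t ∈ Set.Ioc (0:ℝ) 1, t * x ∈ D :=
  stmt_0_general m hm D hD
end

section
/- Let Y be a real vector space, m ∈ (0,1], D a harmonically m-convex set of positive reals, and F : D → (nonempty subsets of Y) a harmonically m-convex set-valued function. If A ⊆ D is a harmonically m-convex set, then the image F(A) = ⋃_{z ∈ A} F(z) is an m-convex subset of Y. -/
open Pointwise

/-- A set-valued function `F` on `D` is harmonically `m`-convex. -/
def SVHarmMConvex {Y : Type*} [AddCommGroup Y] [Module ℝ Y]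
    (m : ℝ) (D : Set ℝ) (F : ℝ → Set Y) : Prop :=
  ∀ x ∈ D, ∀ y ∈ D, ∀ t ∈ Set.Icc (0:ℝ) 1,
    t • F y + (m * (1 - t)) • F x ⊆ F (m * x * y / (t * m * x + (1 - t) * y))


/-- A subset `S` of a real vector space is `m`-convex. -/
def MConvexSet {Y : Type*} [AddCommGroup Y] [Module ℝ Y] (m : ℝ) (S : Set Y) : Prop :=
  ∀ a ∈ S, ∀ b ∈ S, ∀ t ∈ Set.Icc (0:ℝ) 1, t • b + (m * (1 - t)) • a ∈ S

theorem stmt_2_general {Y : Type*} [AddCommGroup Y] [Module ℝ Y]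
    (m : ℝ) (D : Set ℝ)
    (F : ℝ → Set Y)
    (hF : SVHarmMConvex m D F)
    (A : Set ℝ) (hAD : A ⊆ D) (hA : HarmMConvexSet m A) :
    MConvexSet m (⋃ z ∈ A, F z) := by
  intro a ha b hb t ht
  obtain ⟨x, hxA, hax⟩ := Set.mem_iUnion₂.mp ha
  obtain ⟨y, hyA, hby⟩ := Set.mem_iUnion₂.mp hb
  refine Set.mem_iUnion₂.mpr ⟨_, hA x hxA y hyA t ht, ?_⟩
  exact hF x (hAD hxA) y (hAD hyA) t ht
    (Set.add_mem_add (Set.smul_mem_smul_set hby) (Set.smul_mem_smul_set hax))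

theorem stmt_2 {Y : Type*} [AddCommGroup Y] [Module ℝ Y]
    (m : ℝ) (hm : m ∈ Set.Ioc (0:ℝ) 1) (D : Set ℝ)
    (hDpos : ∀ x ∈ D, 0 < x) (hD : HarmMConvexSet m D)
    (F : ℝ → Set Y) (hFne : ∀ x ∈ D, (F x).Nonempty)
    (hF : SVHarmMConvex m D F)
    (A : Set ℝ) (hAD : A ⊆ D) (hA : HarmMConvexSet m A) :
    MConvexSet m (⋃ z ∈ A, F z) :=
  stmt_2_general m D F hF A hAD hA
end

section
/- Let Y be a real vector space, m ∈ (0,1], D a harmonically m-convex set of positive reals, and F : D → (nonempty subsets of Y) a harmonically m-convex set-valued function. Then the range of F, namely F(D) = ⋃_{z ∈ D} F(z), is an m-convex subset of Y. -/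
open Pointwise

theorem stmt_3_general {Y : Type*} [AddCommGroup Y] [Module ℝ Y]
    (m : ℝ) (D : Set ℝ)
    (hD : HarmMConvexSet m D)
    (F : ℝ → Set Y)
    (hF : SVHarmMConvex m D F) :
    MConvexSet m (⋃ z ∈ D, F z) := by
  intro a ha b hb t ht
  obtain ⟨x, hx, hax⟩ := Set.mem_iUnion₂.mp ha
  obtain ⟨y, hy, hby⟩ := Set.mem_iUnion₂.mp hb
  exact Set.mem_iUnion₂.mpr ⟨_, hD x hx y hy t ht,
    hF x hx y hy t ht (Set.add_mem_add (Set.smul_mem_smul_set hby) (Set.smul_mem_smul_set hax))⟩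

theorem stmt_3 {Y : Type*} [AddCommGroup Y] [Module ℝ Y]
    (m : ℝ) (hm : m ∈ Set.Ioc (0:ℝ) 1) (D : Set ℝ)
    (hDpos : ∀ x ∈ D, 0 < x) (hD : HarmMConvexSet m D)
    (F : ℝ → Set Y) (hFne : ∀ x ∈ D, (F x).Nonempty)
    (hF : SVHarmMConvex m D F) :
    MConvexSet m (⋃ z ∈ D, F z) :=
  stmt_3_general m D hD F hF
end

section
/- Let Y be a real vector space, m ∈ (0,1], and D a harmonically m-convex set of positive reals. A set-valued function F : D → (nonempty subsets of Y) is harmonically m-convex if and only if for all nonempty subsets A, B ⊆ D and all t ∈ [0,1], one has t • F(B) + m*(1-t) • F(A) ⊆ F( { m*a*b/(t*m*a + (1-t)*b) : a ∈ A, b ∈ B } ), where for a set S ⊆ D we write F(S) = ⋃_{s ∈ S} F(s). -/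
open Pointwise

theorem Set.smul_biUnion_add_smul_biUnion_subset {α K Y : Type*} [Add Y] [SMul K Y]
    {F : α → Set Y} {g : α → α → α} {s r : K} {A B : Set α}
    (h : ∀ a ∈ A, ∀ b ∈ B, s • F b + r • F a ⊆ F (g a b)) :
    s • (⋃ b ∈ B, F b) + r • (⋃ a ∈ A, F a) ⊆
      ⋃ z ∈ {z | ∃ a ∈ A, ∃ b ∈ B, z = g a b}, F z := by
  simp only [Set.smul_set_iUnion₂, Set.iUnion₂_add, Set.add_iUnion₂, Set.iUnion₂_subset_iff]
  intro a ha b hb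
  exact (h a ha b hb).trans (Set.subset_biUnion_of_mem (u := F) ⟨a, ha, b, hb, rfl⟩)

theorem stmt_4_general {Y : Type*} [AddCommGroup Y] [Module ℝ Y]
    (m : ℝ) (D : Set ℝ)
    (F : ℝ → Set Y) :
    SVHarmMConvex m D F ↔
      ∀ A B : Set ℝ, A.Nonempty → B.Nonempty → A ⊆ D → B ⊆ D →
        ∀ t ∈ Set.Icc (0:ℝ) 1,
          t • (⋃ b ∈ B, F b) + (m * (1 - t)) • (⋃ a ∈ A, F a) ⊆
            ⋃ z ∈ {z : ℝ | ∃ a ∈ A, ∃ b ∈ B,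
              z = m * a * b / (t * m * a + (1 - t) * b)}, F z := by
  constructor
  · intro hF A B _ _ hAD hBD t ht
    exact Set.smul_biUnion_add_smul_biUnion_subset fun a ha b hb ↦ hF a (hAD ha) b (hBD hb) t ht
  · intro h x hx y hy t ht
    simpa using h {x} {y} (Set.singleton_nonempty x) (Set.singleton_nonempty y)
      (Set.singleton_subset_iff.2 hx) (Set.singleton_subset_iff.2 hy) t ht

theorem stmt_4 {Y : Type*} [AddCommGroup Y] [Module ℝ Y]
    (m : ℝ) (hm : m ∈ Set.Ioc (0:ℝ) 1) (D : Set ℝ)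
    (hDpos : ∀ x ∈ D, 0 < x) (hD : HarmMConvexSet m D)
    (F : ℝ → Set Y) (hFne : ∀ x ∈ D, (F x).Nonempty) :
    SVHarmMConvex m D F ↔
      ∀ A B : Set ℝ, A.Nonempty → B.Nonempty → A ⊆ D → B ⊆ D →
        ∀ t ∈ Set.Icc (0:ℝ) 1,
          t • (⋃ b ∈ B, F b) + (m * (1 - t)) • (⋃ a ∈ A, F a) ⊆
            ⋃ z ∈ {z : ℝ | ∃ a ∈ A, ∃ b ∈ B,
              z = m * a * b / (t * m * a + (1 - t) * b)}, F z :=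
  stmt_4_general m D F
end

section
/- (Hermite–Hadamard inclusion, first half.) Let m ∈ (0,1], D a harmonically m-convex set of positive reals, and F : D → (nonempty subsets of ℝ) a harmonically m-convex set-valued function. Let 0 < a < b with b ∈ D and a/m ∈ D (so that the closed interval [a,b] is contained in D). Then for every u ∈ F(b) and every v ∈ F(a/m), the point (u + m*v)/2 belongs to the Aumann integral set; that is, there exists a function f : ℝ → ℝ that is integrable on [a,b], satisfies f(x) ∈ F(x) for every x ∈ [a,b], and for which (a*b/(b-a)) * ∫_a^b f(x)/x² dx = (u + m*v)/2. -/
open Pointwise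

/-!
In the variable `1/x` harmonic `m`-convexity is ordinary convexity: the point
`m x y / (t m x + (1 - t) y)` is the one whose reciprocal is `t / y + (1 - t) / (m x)`.
Hence the function that is affine in `1/x`, equal to `u` at `b` and to `m v` at `a`, is a
selection of `F` on `[a, b]`. The substitution `s = 1/x` turns `a b / (b - a) ∫ f(x) / x² dx`
into the mean of this affine function over `[1/b, 1/a]`, i.e. its value `(u + m v) / 2` at the
midpoint.
-/

open Set intervalIntegral

theorem integral_comp_inv_div_sq {a b : ℝ} (h0 : (0 : ℝ) ∉ uIcc a b) {g : ℝ → ℝ}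
    (hg : Continuous g) :
    ∫ x in a..b, g x⁻¹ / x ^ 2 = ∫ s in b⁻¹..a⁻¹, g s := by
  have hderiv : ∀ x ∈ uIcc a b, HasDerivAt (·⁻¹) (-(x ^ 2)⁻¹) x := fun x hx =>
    hasDerivAt_inv (ne_of_mem_of_not_mem hx h0)
  have hcont : ContinuousOn (fun x : ℝ => -(x ^ 2)⁻¹) (uIcc a b) :=
    ((continuousOn_pow 2).inv₀ fun x hx => pow_ne_zero 2 (ne_of_mem_of_not_mem hx h0)).neg
  rw [integral_symm a⁻¹ b⁻¹, ← integral_comp_mul_deriv hderiv hcont hg, ← integral_neg]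
  simp only [Function.comp_apply, mul_neg, neg_neg, div_eq_mul_inv]

theorem integral_sub_mul_add_sub_mul (p q c d : ℝ) :
    ∫ s in q..p, ((p - s) * c + (s - q) * d) = (p - q) ^ 2 * (c + d) / 2 := by
  have hint {f : ℝ → ℝ} (hf : Continuous f) : IntervalIntegrable f MeasureTheory.volume q p :=
    hf.intervalIntegrable q p
  rw [integral_add (hint (by fun_prop)) (hint (by fun_prop)), integral_mul_const,
    integral_mul_const, integral_sub (hint (by fun_prop)) (hint (by fun_prop)),
    integral_sub (hint (by fun_prop)) (hint (by fun_prop))]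
  simp only [integral_const, smul_eq_mul, integral_id]
  ring

theorem SVHarmMConvex.smul_add_smul_mem {Y : Type*} [AddCommGroup Y] [Module ℝ Y]
    {m : ℝ} {D : Set ℝ} {F : ℝ → Set Y} (hF : SVHarmMConvex m D F) {x y : ℝ} (hx : x ∈ D)
    (hy : y ∈ D) (hmx : m * x ≠ 0) (hy0 : y ≠ 0) {t : ℝ} (ht : t ∈ Icc 0 1) {u v : Y}
    (hu : u ∈ F y) (hv : v ∈ F x) {z : ℝ} (hz : z⁻¹ = t * y⁻¹ + (1 - t) * (m * x)⁻¹) :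
    t • u + (m * (1 - t)) • v ∈ F z := by
  have hz' : z = m * x * y / (t * m * x + (1 - t) * y) := by
    obtain ⟨hm0, hx0⟩ := mul_ne_zero_iff.1 hmx
    rw [← inv_inv z, hz, ← inv_div]
    congr 1
    field_simp
  exact hz' ▸ hF x hx y hy t ht (add_mem_add (smul_mem_smul_set hu) (smul_mem_smul_set hv))

theorem sub_div_sub_mem_Icc {p q s : ℝ} (hqp : q < p) (hs : s ∈ Icc q p) :
    (p - s) / (p - q) ∈ Icc 0 1 :=
  ⟨div_nonneg (sub_nonneg.2 hs.2) (sub_nonneg.2 hqp.le),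
    div_le_one_of_le₀ (by linarith [hs.1]) (sub_nonneg.2 hqp.le)⟩

noncomputable def harmonicInterpolant (a b u w x : ℝ) : ℝ :=
  ((a⁻¹ - x⁻¹) * u + (x⁻¹ - b⁻¹) * w) / (a⁻¹ - b⁻¹)

theorem continuousOn_harmonicInterpolant {s : Set ℝ} (h0 : (0 : ℝ) ∉ s) (a b u w : ℝ) :
    ContinuousOn (harmonicInterpolant a b u w) s := by
  have hinv : ContinuousOn (·⁻¹) s :=
    continuousOn_inv₀.mono fun x hx => ne_of_mem_of_not_mem hx h0
  unfold harmonicInterpolant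
  fun_prop

theorem integral_harmonicInterpolant_div_sq {a b : ℝ} (h0 : (0 : ℝ) ∉ uIcc a b) (hab : a ≠ b)
    (u w : ℝ) :
    a * b / (b - a) * ∫ x in a..b, harmonicInterpolant a b u w x / x ^ 2 = (u + w) / 2 := by
  have ha : a ≠ 0 := fun h => h0 (h ▸ left_mem_uIcc)
  have hb : b ≠ 0 := fun h => h0 (h ▸ right_mem_uIcc)
  have hba : b - a ≠ 0 := sub_ne_zero.2 hab.symm
  simp only [harmonicInterpolant]
  rw [integral_comp_inv_div_sq h0 (g := fun s => ((a⁻¹ - s) * u + (s - b⁻¹) * w) / (a⁻¹ - b⁻¹))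
    (by fun_prop), integral_div, integral_sub_mul_add_sub_mul]
  field_simp

theorem SVHarmMConvex.harmonicInterpolant_mem {m : ℝ} {D : Set ℝ} {F : ℝ → Set ℝ}
    (hF : SVHarmMConvex m D F) (hm : m ≠ 0) {a b : ℝ} (ha : 0 < a) (hab : a < b)
    (haD : a / m ∈ D) (hbD : b ∈ D) {u v : ℝ} (hu : u ∈ F b) (hv : v ∈ F (a / m)) {x : ℝ}
    (hx : x ∈ Icc a b) : harmonicInterpolant a b u (m * v) x ∈ F x := by
  have hb : 0 < b := ha.trans hab
  have hx0 : 0 < x := ha.trans_le hx.1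
  have hinv : b⁻¹ < a⁻¹ := inv_strictAnti₀ ha hab
  have hma : m * (a / m) = a := mul_div_cancel₀ a hm
  have ht := sub_div_sub_mem_Icc hinv ⟨inv_anti₀ hx0 hx.2, inv_anti₀ ha hx.1⟩
  have hba : b - a ≠ 0 := (sub_pos.2 hab).ne'
  convert hF.smul_add_smul_mem haD hbD (hma.symm ▸ ha.ne') hb.ne' ht hu hv ?_ using 1
  · simp only [harmonicInterpolant, smul_eq_mul]
    field_simp
    ring
  · rw [hma]
    field_simp
    ring

theorem stmt_8_general (m : ℝ) (hm : m ∈ Set.Ioc (0:ℝ) 1) (D : Set ℝ)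
    (F : ℝ → Set ℝ) (hF : SVHarmMConvex m D F)
    (a b : ℝ) (ha : 0 < a) (hab : a < b) (hbD : b ∈ D) (haD : a / m ∈ D)
    (u v : ℝ) (hu : u ∈ F b) (hv : v ∈ F (a / m)) :
    ∃ f : ℝ → ℝ, MeasureTheory.IntegrableOn f (Set.Icc a b) ∧
      (∀ x ∈ Set.Icc a b, f x ∈ F x) ∧
      (a * b / (b - a)) * ∫ x in a..b, f x / x ^ 2 = (u + m * v) / 2 := by
  have h0 : (0 : ℝ) ∉ uIcc a b := by
    rw [uIcc_of_le hab.le]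
    exact fun h => ha.not_ge h.1
  exact ⟨harmonicInterpolant a b u (m * v),
    (continuousOn_harmonicInterpolant (fun h => ha.not_ge h.1) a b u (m * v)).integrableOn_Icc,
    fun x hx => hF.harmonicInterpolant_mem hm.1.ne' ha hab haD hbD hu hv hx,
    integral_harmonicInterpolant_div_sq h0 hab.ne u (m * v)⟩

theorem stmt_8 (m : ℝ) (hm : m ∈ Set.Ioc (0:ℝ) 1) (D : Set ℝ)
    (hDpos : ∀ x ∈ D, 0 < x) (hD : HarmMConvexSet m D)
    (F : ℝ → Set ℝ) (hFne : ∀ x ∈ D, (F x).Nonempty)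
    (hF : SVHarmMConvex m D F)
    (a b : ℝ) (ha : 0 < a) (hab : a < b) (hbD : b ∈ D) (haD : a / m ∈ D)
    (hIcc : Set.Icc a b ⊆ D)
    (u v : ℝ) (hu : u ∈ F b) (hv : v ∈ F (a / m)) :
    ∃ f : ℝ → ℝ, MeasureTheory.IntegrableOn f (Set.Icc a b) ∧
      (∀ x ∈ Set.Icc a b, f x ∈ F x) ∧
      (a * b / (b - a)) * ∫ x in a..b, f x / x ^ 2 = (u + m * v) / 2 :=
  stmt_8_general m hm D F hF a b ha hab hbD haD u v hu hv
end

section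
/- Let m ∈ (0,1], D a harmonically m-convex set of positive reals, and f₁, f₂ : D → ℝ functions such that f₁ is harmonically m-convex, −f₂ is harmonically m-convex, and f₁(x) ≤ f₂(x) for all x ∈ D. Then the interval-valued function F(x) = [f₁(x), f₂(x)] (the closed interval from f₁(x) to f₂(x)) is a harmonically m-convex set-valued function on D; that is, for all x, y ∈ D and t ∈ [0,1], t • F(y) + m*(1-t) • F(x) ⊆ F(m*x*y/(t*m*x + (1-t)*y)). -/
open Pointwise

namespace Set

variable {α : Type*} [Semiring α] [PartialOrder α] [IsOrderedRing α]

theorem smul_Icc_subset_of_nonneg {r : α} (hr : 0 ≤ r) (a b : α) :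
    r • Icc a b ⊆ Icc (r * a) (r * b) := by
  rintro _ ⟨x, hx, rfl⟩
  exact ⟨mul_le_mul_of_nonneg_left hx.1 hr, mul_le_mul_of_nonneg_left hx.2 hr⟩

theorem smul_Icc_add_smul_Icc_subset {r s : α} (hr : 0 ≤ r) (hs : 0 ≤ s) (a b c d : α) :
    r • Icc a b + s • Icc c d ⊆ Icc (r * a + s * c) (r * b + s * d) :=
  (add_subset_add (smul_Icc_subset_of_nonneg hr a b) (smul_Icc_subset_of_nonneg hs c d)).trans
    (Icc_add_Icc_subset _ _ _ _)

end Set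

theorem stmt_10_general (m : ℝ) (hm : m ∈ Set.Ioc (0:ℝ) 1) (D : Set ℝ)
    (f₁ f₂ : ℝ → ℝ)
    (hf₁ : ∀ x ∈ D, ∀ y ∈ D, ∀ t ∈ Set.Icc (0:ℝ) 1,
      f₁ (m * x * y / (t * m * x + (1 - t) * y)) ≤ t * f₁ y + m * (1 - t) * f₁ x)
    (hf₂ : ∀ x ∈ D, ∀ y ∈ D, ∀ t ∈ Set.Icc (0:ℝ) 1,
      (-f₂) (m * x * y / (t * m * x + (1 - t) * y)) ≤ t * (-f₂) y + m * (1 - t) * (-f₂) x) :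
    SVHarmMConvex m D (fun x => Set.Icc (f₁ x) (f₂ x)) := by
  intro x hx y hy t ht
  have hf₂' : t * f₂ y + m * (1 - t) * f₂ x ≤ f₂ (m * x * y / (t * m * x + (1 - t) * y)) := by
    have := hf₂ x hx y hy t ht
    simp only [Pi.neg_apply] at this
    linarith
  have hweight : 0 ≤ m * (1 - t) := mul_nonneg hm.1.le (sub_nonneg.2 ht.2)
  exact (Set.smul_Icc_add_smul_Icc_subset ht.1 hweight _ _ _ _).trans
    (Set.Icc_subset_Icc (hf₁ x hx y hy t ht) hf₂')

theorem stmt_10 (m : ℝ) (hm : m ∈ Set.Ioc (0:ℝ) 1) (D : Set ℝ)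
    (hDpos : ∀ x ∈ D, 0 < x) (hD : HarmMConvexSet m D)
    (f₁ f₂ : ℝ → ℝ)
    (hf₁ : ∀ x ∈ D, ∀ y ∈ D, ∀ t ∈ Set.Icc (0:ℝ) 1,
      f₁ (m * x * y / (t * m * x + (1 - t) * y)) ≤ t * f₁ y + m * (1 - t) * f₁ x)
    (hf₂ : ∀ x ∈ D, ∀ y ∈ D, ∀ t ∈ Set.Icc (0:ℝ) 1,
      (-f₂) (m * x * y / (t * m * x + (1 - t) * y)) ≤ t * (-f₂) y + m * (1 - t) * (-f₂) x)
    (hle : ∀ x ∈ D, f₁ x ≤ f₂ x) :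
    SVHarmMConvex m D (fun x => Set.Icc (f₁ x) (f₂ x)) :=
  stmt_10_general m hm D f₁ f₂ hf₁ hf₂
end
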